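/- arXiv:2512.11891 — 3 statements merged into one kernel-verified Lean document; each statement's English description precedes it below -/
import Mathlib

section
/- Let α : ℝ → ℝ be locally Lipschitz, strictly monotone increasing, and satisfy α(0) = 0. Let t₀ ∈ ℝ and let f : ℝ → ℝ be differentiable on [t₀, ∞) with f'(t) ≥ −α(f(t)) for every t ≥ t₀. If f(t₀) ≥ 0, then f(t) ≥ 0 for every t ≥ t₀. -/
open Set

theorem nonneg_of_deriv_right_pos_of_neg {f f' : ℝ → ℝ} {a b : ℝ}
    (hf : ContinuousOn f (Icc a b))
    (hf' : ∀ x ∈ Ico a b, HasDerivWithinAt f (f' x) (Ici x) x) (ha : 0 ≤ f a)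
    (hpos : ∀ x ∈ Ico a b, f x < 0 → 0 < f' x) :
    ∀ x ∈ Icc a b, 0 ≤ f x := by
  intro x hx
  refine le_of_forall_pos_le_add fun ε hε => ?_
  -- `-f` cannot reach the constant fence `ε > 0`: there `f < 0`, so `-f` is strictly decreasing.
  have barrier : -f x ≤ ε :=
    image_le_of_deriv_right_lt_deriv_boundary (f := fun y => -f y) (B := fun _ => ε)
      (B' := fun _ => 0)
      hf.neg (fun y hy => (hf' y hy).neg) (by linarith) (fun _ => hasDerivAt_const _ _)
      (fun y hy hy_eq => by linarith [hpos y hy (by linarith)])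
      hx
  linarith

theorem stmt1_general (α : ℝ → ℝ) (hmono : StrictMono α)
    (hα0 : α 0 = 0) (t₀ : ℝ) (f f' : ℝ → ℝ)
    (hderiv : ∀ t ∈ Set.Ici t₀, HasDerivWithinAt f (f' t) (Set.Ici t₀) t)
    (hineq : ∀ t ∈ Set.Ici t₀, f' t ≥ -α (f t))
    (h0 : f t₀ ≥ 0) :
    ∀ t ∈ Set.Ici t₀, f t ≥ 0 := by
  intro t ht
  refine nonneg_of_deriv_right_pos_of_neg (b := t) (f' := f') ?_ ?_ h0 ?_ t ⟨ht, le_rfl⟩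
  · exact fun s hs => (hderiv s hs.1).continuousWithinAt.mono Icc_subset_Ici_self
  · exact fun s hs => (hderiv s hs.1).mono (Ici_subset_Ici.mpr hs.1)
  · intro s hs hfs
    have : α (f s) < 0 := hα0 ▸ hmono hfs
    linarith [hineq s hs.1]

/-- Forward invariance of the safe set under a general
extended class-K∞ comparison function: if `α` is locally Lipschitz, strictly
increasing with `α 0 = 0`, and `f` is differentiable on `[t₀, ∞)` with
`f' t ≥ -α (f t)` there, then `f t₀ ≥ 0` implies `f t ≥ 0` for all `t ≥ t₀`. -/
theorem stmt1 (α : ℝ → ℝ) (hlip : LocallyLipschitz α) (hmono : StrictMono α)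
    (hα0 : α 0 = 0) (t₀ : ℝ) (f f' : ℝ → ℝ)
    (hderiv : ∀ t ∈ Set.Ici t₀, HasDerivWithinAt f (f' t) (Set.Ici t₀) t)
    (hineq : ∀ t ∈ Set.Ici t₀, f' t ≥ -α (f t))
    (h0 : f t₀ ≥ 0) :
    ∀ t ∈ Set.Ici t₀, f t ≥ 0 :=
  stmt1_general α hmono hα0 t₀ f f' hderiv hineq h0
end

section
/- Let A, B ∈ ℝ^{d×d} be symmetric positive definite, let c, o ∈ ℝ^d, let p_s ∈ ℝ^d be a unit vector, and set n := A⁻¹·p_s. Then the infimum over y ∈ E(B,o) of the signed distance (⟪n, y − c⟫ − 1)/‖n‖ from y to the hyperplane T := {q : ⟪n, q − c⟫ = 1} equals h(A,c,B,o,p_s) = (−‖B·n‖ + ⟪o − c, n⟫ − 1)/‖n‖, and this infimum is attained. -/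
open scoped RealInnerProductSpace

/-- The linear action of a matrix `A` on `EuclideanSpace ℝ (Fin d)`. -/
noncomputable def mv {d : ℕ} (A : Matrix (Fin d) (Fin d) ℝ)
    (x : EuclideanSpace ℝ (Fin d)) : EuclideanSpace ℝ (Fin d) :=
  (WithLp.equiv 2 (Fin d → ℝ)).symm (A.mulVec ((WithLp.equiv 2 (Fin d → ℝ)) x))

/-- The ellipsoid `E(A, c) = {c + A·s : ‖s‖ ≤ 1}`. -/
noncomputable def ellipsoid {d : ℕ} (A : Matrix (Fin d) (Fin d) ℝ)
    (c : EuclideanSpace ℝ (Fin d)) : Set (EuclideanSpace ℝ (Fin d)) :=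
  {y | ∃ s : EuclideanSpace ℝ (Fin d), ‖s‖ ≤ 1 ∧ y = c + mv A s}

/-- The barrier value `h(A,c,B,o,p_s) = (−‖B·n‖ + ⟪o − c, n⟫ − 1)/‖n‖` with
`n = A⁻¹·p_s` (Eq. (9) of the paper). -/
noncomputable def barrier {d : ℕ} (A : Matrix (Fin d) (Fin d) ℝ)
    (c : EuclideanSpace ℝ (Fin d)) (B : Matrix (Fin d) (Fin d) ℝ)
    (o : EuclideanSpace ℝ (Fin d)) (ps : EuclideanSpace ℝ (Fin d)) : ℝ :=
  (-‖mv B (mv A⁻¹ ps)‖ + ⟪o - c, mv A⁻¹ ps⟫ - 1) / ‖mv A⁻¹ ps‖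

/-! Write `y = o + B s` with `‖s‖ ≤ 1`. Since `B` is symmetric,
`⟪n, y - c⟫ = ⟪n, o - c⟫ + ⟪B n, s⟫`, so the signed distance is a monotone affine function of
`⟪B n, s⟫`. By Cauchy–Schwarz the minimum of `⟪B n, s⟫` over the unit ball is `-‖B n‖`,
attained at `s = -B n / ‖B n‖`. -/

open Metric

lemma isLeast_inner_image_closedBall {E : Type*} [NormedAddCommGroup E] [InnerProductSpace ℝ E]
    (m : E) : IsLeast ((fun s => ⟪m, s⟫) '' closedBall 0 1) (-‖m‖) := by
  refine ⟨⟨-‖m‖⁻¹ • m, ?_, ?_⟩, ?_⟩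
  · rw [mem_closedBall_zero_iff, norm_smul, norm_neg, norm_inv, norm_norm]
    exact inv_mul_le_one_of_le₀ le_rfl (norm_nonneg m)
  · rcases eq_or_ne m 0 with rfl | hm
    · simp
    · dsimp only
      rw [inner_smul_right, real_inner_self_eq_norm_sq]
      field_simp
  · rintro _ ⟨s, hs, rfl⟩
    rw [mem_closedBall_zero_iff] at hs
    calc -‖m‖ ≤ -(‖m‖ * ‖s‖) := by
          gcongr; exact mul_le_of_le_one_right (norm_nonneg m) hs
      _ ≤ ⟪m, s⟫ := neg_le_of_abs_le (abs_real_inner_le_norm m s)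

lemma mv_eq_toEuclideanLin {d : ℕ} (M : Matrix (Fin d) (Fin d) ℝ) (x : EuclideanSpace ℝ (Fin d)) :
    mv M x = M.toEuclideanLin x :=
  rfl

lemma Matrix.IsHermitian.inner_mv_right {d : ℕ} {M : Matrix (Fin d) (Fin d) ℝ}
    (hM : M.IsHermitian) (x y : EuclideanSpace ℝ (Fin d)) : ⟪x, mv M y⟫ = ⟪mv M x, y⟫ := by
  rw [mv_eq_toEuclideanLin, mv_eq_toEuclideanLin]
  exact (Matrix.isSymmetric_toEuclideanLin_iff.mpr hM x y).symm

lemma ellipsoid_eq_image_closedBall {d : ℕ} (A : Matrix (Fin d) (Fin d) ℝ)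
    (c : EuclideanSpace ℝ (Fin d)) : ellipsoid A c = (fun s => c + mv A s) '' closedBall 0 1 := by
  ext y
  simp [ellipsoid, eq_comm]

theorem stmt4_general {d : ℕ} (A B : Matrix (Fin d) (Fin d) ℝ)
    (hB : B.PosDef)
    (c o ps : EuclideanSpace ℝ (Fin d)) :
    IsLeast ((fun y => (⟪mv A⁻¹ ps, y - c⟫ - 1) / ‖mv A⁻¹ ps‖) '' ellipsoid B o)
      (barrier A c B o ps) := by
  set n := mv A⁻¹ ps
  let g : ℝ → ℝ := fun t => (⟪n, o - c⟫ + t - 1) / ‖n‖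
  have hg : Monotone g := fun t t' h => by dsimp only [g]; gcongr
  have himage : (fun y => (⟪n, y - c⟫ - 1) / ‖n‖) '' ellipsoid B o
      = g '' ((fun s => ⟪mv B n, s⟫) '' closedBall 0 1) := by
    rw [ellipsoid_eq_image_closedBall, Set.image_image, Set.image_image]
    refine Set.image_congr fun s _ => ?_
    dsimp only [g]
    rw [add_sub_right_comm, inner_add_right, hB.isHermitian.inner_mv_right]
  rw [himage]
  have hvalue : barrier A c B o ps = g (-‖mv B n‖) := by
    simp only [barrier, g, n, real_inner_comm]
    ring
  rw [hvalue]
  exact hg.map_isLeast (isLeast_inner_image_closedBall (mv B n))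

/-- With `n = A⁻¹·p_s`, the infimum over `y ∈ E(B,o)` of the
signed distance `(⟪n, y − c⟫ − 1)/‖n‖` from `y` to the hyperplane
`T = {q : ⟪n, q − c⟫ = 1}` is exactly the barrier value
`h(A,c,B,o,p_s) = (−‖B·n‖ + ⟪o − c, n⟫ − 1)/‖n‖`, and it is attained. -/
theorem stmt4 {d : ℕ} (A B : Matrix (Fin d) (Fin d) ℝ)
    (hA : A.PosDef) (hB : B.PosDef)
    (c o ps : EuclideanSpace ℝ (Fin d)) (hps : ‖ps‖ = 1) :
    IsLeast ((fun y => (⟪mv A⁻¹ ps, y - c⟫ - 1) / ‖mv A⁻¹ ps‖) '' ellipsoid B o)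
      (barrier A c B o ps) :=
  stmt4_general A B hB c o ps
end

section
/- Let A, B ∈ ℝ^{d×d} be symmetric positive definite and c, o ∈ ℝ^d, and suppose the ellipsoids E(A,c) and E(B,o) are disjoint. Then the supremum over unit vectors p_s ∈ ℝ^d of the barrier value h(A,c,B,o,p_s) equals the Euclidean distance between the two ellipsoids, i.e. sup{h(A,c,B,o,p_s) : ‖p_s‖ = 1} = inf{‖x − y‖ : x ∈ E(A,c), y ∈ E(B,o)}, and the supremum is attained at some unit vector p_s. -/
open scoped RealInnerProductSpace

/-!
For a unit vector `u`, the supporting hyperplanes of the two ellipsoids with normal `u` bound a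
slab of signed width `⟪o - c, u⟫ - ‖A u‖ - ‖B u‖`, and every pair of points `x ∈ E(A,c)`, `y ∈ E(B,o)`
is at least that far apart (weak duality). Conversely, the nearest pair `x₀, y₀` exists by
compactness, and since it minimises the norm on the convex set `E(A,c) - E(B,o)` it satisfies
`‖x₀ - y₀‖² ≤ ⟪x₀ - y₀, x - y⟫` there; in the direction `u = (y₀ - x₀)/‖x₀ - y₀‖` the slab is
therefore exactly `‖x₀ - y₀‖` wide. The barrier value at `p_s` is the slab width in the direction
of `A⁻¹ p_s`, and `p_s ↦ A⁻¹ p_s / ‖A⁻¹ p_s‖` maps the unit sphere onto itself.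
-/

open scoped Pointwise

lemma norm_sq_le_inner_of_isMinOn {E : Type*} [NormedAddCommGroup E] [InnerProductSpace ℝ E]
    {K : Set E} (hK : Convex ℝ K) {z w : E} (hz : z ∈ K) (hmin : IsMinOn (‖·‖) K z)
    (hw : w ∈ K) : ‖z‖ ^ 2 ≤ ⟪z, w⟫ := by
  have : Nonempty K := ⟨z, hz⟩
  have hproj : ‖0 - z‖ = ⨅ v : K, ‖0 - (v : E)‖ := by
    simp only [zero_sub, norm_neg]
    exact le_antisymm (le_ciInf fun v ↦ hmin v.2)
      (ciInf_le (f := fun v : K ↦ ‖(v : E)‖) ⟨0, by rintro _ ⟨v, rfl⟩; positivity⟩ ⟨z, hz⟩)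
  have := (norm_eq_iInf_iff_real_inner_le_zero hK hz).mp hproj w hw
  rw [zero_sub, inner_neg_left, inner_sub_right, real_inner_self_eq_norm_sq] at this
  linarith

lemma exists_isMinOn_norm_sub {E : Type*} [SeminormedAddCommGroup E] {S T : Set E}
    (hS : IsCompact S) (hT : IsCompact T) (hS₀ : S.Nonempty) (hT₀ : T.Nonempty) :
    ∃ x ∈ S, ∃ y ∈ T, IsMinOn (‖·‖) (S - T) (x - y) := by
  have hST : IsCompact (S - T) := by
    rw [← Set.sub_image_prod]
    exact (hS.prod hT).image continuous_sub
  obtain ⟨_, ⟨x, hx, y, hy, rfl⟩, hmin⟩ :=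
    hST.exists_isMinOn (hS₀.sub hT₀) continuous_norm.continuousOn
  exact ⟨x, hx, y, hy, hmin⟩

section Ellipsoid

variable {d : ℕ} {A B : Matrix (Fin d) (Fin d) ℝ}

lemma mv_eq_toEuclideanLin_s7 (A : Matrix (Fin d) (Fin d) ℝ) : mv A = Matrix.toEuclideanLin A :=
  rfl

lemma inner_mv_left (hA : A.IsHermitian) (x y : EuclideanSpace ℝ (Fin d)) :
    ⟪mv A x, y⟫ = ⟪x, mv A y⟫ :=
  Matrix.isSymmetric_toEuclideanLin_iff.mpr hA x y

lemma mv_mv_inv (hA : IsUnit A) (x : EuclideanSpace ℝ (Fin d)) : mv A (mv A⁻¹ x) = x := by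
  simp [mv, Matrix.mulVec_mulVec, Matrix.mul_nonsing_inv _ (A.isUnit_iff_isUnit_det.mp hA)]

lemma mv_inv_mv (hA : IsUnit A) (x : EuclideanSpace ℝ (Fin d)) : mv A⁻¹ (mv A x) = x := by
  simp [mv, Matrix.mulVec_mulVec, Matrix.nonsing_inv_mul _ (A.isUnit_iff_isUnit_det.mp hA)]

lemma mv_neg (A : Matrix (Fin d) (Fin d) ℝ) (x : EuclideanSpace ℝ (Fin d)) :
    mv A (-x) = -mv A x :=
  map_neg (Matrix.toEuclideanLin A) x

lemma mv_zero (A : Matrix (Fin d) (Fin d) ℝ) : mv A (0 : EuclideanSpace ℝ (Fin d)) = 0 :=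
  map_zero (Matrix.toEuclideanLin A)

lemma mv_smul (A : Matrix (Fin d) (Fin d) ℝ) (t : ℝ) (x : EuclideanSpace ℝ (Fin d)) :
    mv A (t • x) = t • mv A x :=
  map_smul (Matrix.toEuclideanLin A) t x

lemma mv_eq_zero_iff (hA : IsUnit A) {x : EuclideanSpace ℝ (Fin d)} : mv A x = 0 ↔ x = 0 :=
  ⟨fun h ↦ by rw [← mv_inv_mv hA x, h, mv_zero], fun h ↦ h ▸ mv_zero A⟩

lemma ellipsoid_eq_image (A : Matrix (Fin d) (Fin d) ℝ) (c : EuclideanSpace ℝ (Fin d)) :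
    ellipsoid A c = (c + ·) '' (Matrix.toEuclideanLin A '' Metric.closedBall 0 1) := by
  ext y
  simp only [ellipsoid, Set.image_image, Set.mem_image, Metric.mem_closedBall, dist_zero_right,
    mv_eq_toEuclideanLin_s7, Set.mem_ofPred_eq, eq_comm]

lemma isCompact_ellipsoid (A : Matrix (Fin d) (Fin d) ℝ) (c : EuclideanSpace ℝ (Fin d)) :
    IsCompact (ellipsoid A c) := by
  rw [ellipsoid_eq_image]
  exact ((isCompact_closedBall 0 1).image
    (Matrix.toEuclideanLin A).continuous_of_finiteDimensional).image (continuous_const_add c)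

lemma convex_ellipsoid (A : Matrix (Fin d) (Fin d) ℝ) (c : EuclideanSpace ℝ (Fin d)) :
    Convex ℝ (ellipsoid A c) := by
  rw [ellipsoid_eq_image]
  exact ((convex_closedBall 0 1).linear_image _).translate c

lemma center_mem_ellipsoid (A : Matrix (Fin d) (Fin d) ℝ) (c : EuclideanSpace ℝ (Fin d)) :
    c ∈ ellipsoid A c :=
  ⟨0, by simp, by simp [mv_eq_toEuclideanLin_s7]⟩

lemma isGreatest_inner_ellipsoid (hA : A.IsHermitian) (c u : EuclideanSpace ℝ (Fin d)) :
    IsGreatest ((⟪·, u⟫) '' ellipsoid A c) (⟪c, u⟫ + ‖mv A u‖) := by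
  refine ⟨⟨c + mv A (‖mv A u‖⁻¹ • mv A u), ⟨_, ?_, rfl⟩, ?_⟩, ?_⟩
  · rw [norm_smul, norm_inv, norm_norm]
    exact inv_mul_le_one_of_le₀ le_rfl (norm_nonneg _)
  · dsimp only
    rw [inner_add_left, inner_mv_left hA, real_inner_smul_left, real_inner_self_eq_norm_sq]
    rcases eq_or_ne ‖mv A u‖ 0 with h | h
    · simp [h]
    · field_simp
  · rintro _ ⟨_, ⟨s, hs, rfl⟩, rfl⟩
    dsimp only
    rw [inner_add_left, inner_mv_left hA]
    have := (real_inner_le_norm s (mv A u)).trans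
      (mul_le_of_le_one_left (norm_nonneg _) hs)
    linarith

lemma inner_le_of_mem_ellipsoid (hA : A.IsHermitian) {c x : EuclideanSpace ℝ (Fin d)}
    (hx : x ∈ ellipsoid A c) (u : EuclideanSpace ℝ (Fin d)) : ⟪x, u⟫ ≤ ⟪c, u⟫ + ‖mv A u‖ :=
  (isGreatest_inner_ellipsoid hA c u).2 ⟨x, hx, rfl⟩

/-- For a unit vector `u`, the signed width of the slab between the supporting hyperplanes
`⟪x, u⟫ = ⟪c, u⟫ + ‖A u‖` of `E(A,c)` and `⟪y, u⟫ = ⟪o, u⟫ - ‖B u‖` of `E(B,o)`. -/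
noncomputable def separation (A : Matrix (Fin d) (Fin d) ℝ) (c : EuclideanSpace ℝ (Fin d))
    (B : Matrix (Fin d) (Fin d) ℝ) (o u : EuclideanSpace ℝ (Fin d)) : ℝ :=
  ⟪o - c, u⟫ - ‖mv A u‖ - ‖mv B u‖

variable {c o : EuclideanSpace ℝ (Fin d)}

lemma separation_smul {t : ℝ} (ht : 0 ≤ t) (u : EuclideanSpace ℝ (Fin d)) :
    separation A c B o (t • u) = t * separation A c B o u := by
  simp only [separation, mv_eq_toEuclideanLin_s7, map_smul, norm_smul, real_inner_smul_right,
    Real.norm_of_nonneg ht]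
  ring

lemma separation_le_inner_sub (hA : A.IsHermitian) (hB : B.IsHermitian)
    {x y : EuclideanSpace ℝ (Fin d)} (hx : x ∈ ellipsoid A c) (hy : y ∈ ellipsoid B o)
    (u : EuclideanSpace ℝ (Fin d)) : separation A c B o u ≤ ⟪y - x, u⟫ := by
  have hxu := inner_le_of_mem_ellipsoid hA hx u
  have hyu := inner_le_of_mem_ellipsoid hB hy (-u)
  simp only [inner_neg_right, mv_neg, norm_neg] at hyu
  rw [separation, inner_sub_left, inner_sub_left]
  linarith

lemma separation_le_norm_sub (hA : A.IsHermitian) (hB : B.IsHermitian)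
    {x y u : EuclideanSpace ℝ (Fin d)} (hx : x ∈ ellipsoid A c) (hy : y ∈ ellipsoid B o)
    (hu : ‖u‖ = 1) : separation A c B o u ≤ ‖x - y‖ :=
  calc separation A c B o u ≤ ⟪y - x, u⟫ := separation_le_inner_sub hA hB hx hy u
    _ ≤ ‖y - x‖ * ‖u‖ := real_inner_le_norm _ _
    _ = ‖x - y‖ := by rw [hu, mul_one, norm_sub_rev]

lemma exists_inner_sub_eq_separation (hA : A.IsHermitian) (hB : B.IsHermitian)
    (u : EuclideanSpace ℝ (Fin d)) :
    ∃ x ∈ ellipsoid A c, ∃ y ∈ ellipsoid B o, ⟪y - x, u⟫ = separation A c B o u := by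
  obtain ⟨x, hx, hxu⟩ := (isGreatest_inner_ellipsoid hA c u).1
  obtain ⟨y, hy, hyu⟩ := (isGreatest_inner_ellipsoid hB o (-u)).1
  simp only [inner_neg_right, mv_neg, norm_neg] at hxu hyu
  refine ⟨x, hx, y, hy, ?_⟩
  rw [separation, inner_sub_left, inner_sub_left]
  linarith

lemma exists_norm_le_separation (hA : A.IsHermitian) (hB : B.IsHermitian)
    {x₀ y₀ : EuclideanSpace ℝ (Fin d)} (hx₀ : x₀ ∈ ellipsoid A c) (hy₀ : y₀ ∈ ellipsoid B o)
    (hmin : IsMinOn (‖·‖) (ellipsoid A c - ellipsoid B o) (x₀ - y₀)) (hne : x₀ ≠ y₀) :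
    ∃ u, ‖u‖ = 1 ∧ ‖x₀ - y₀‖ ≤ separation A c B o u := by
  set z := x₀ - y₀
  have hz : z ≠ 0 := sub_ne_zero.mpr hne
  refine ⟨-(‖z‖⁻¹ • z), by rw [norm_neg]; exact norm_smul_inv_norm hz, ?_⟩
  obtain ⟨x, hx, y, hy, hsep⟩ := exists_inner_sub_eq_separation (c := c) (o := o) hA hB
    (-(‖z‖⁻¹ • z))
  have hvar : ‖z‖ ^ 2 ≤ ⟪z, x - y⟫ :=
    norm_sq_le_inner_of_isMinOn ((convex_ellipsoid A c).sub (convex_ellipsoid B o))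
      (Set.sub_mem_sub hx₀ hy₀) hmin (Set.sub_mem_sub hx hy)
  calc ‖z‖ = ‖z‖⁻¹ * ‖z‖ ^ 2 := by field_simp
    _ ≤ ‖z‖⁻¹ * ⟪z, x - y⟫ := by gcongr
    _ = ⟪y - x, -(‖z‖⁻¹ • z)⟫ := by
      rw [inner_neg_right, real_inner_smul_right, real_inner_comm, ← neg_sub y x, inner_neg_left]
      ring
    _ = separation A c B o (-(‖z‖⁻¹ • z)) := hsep

lemma barrier_eq_separation (hA : IsUnit A) {ps : EuclideanSpace ℝ (Fin d)} (hps : ‖ps‖ = 1) :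
    barrier A c B o ps = separation A c B o (‖mv A⁻¹ ps‖⁻¹ • mv A⁻¹ ps) := by
  rw [separation_smul (inv_nonneg.mpr (norm_nonneg _)), separation, barrier, mv_mv_inv hA, hps,
    div_eq_inv_mul]
  ring

lemma setOf_barrier_eq_setOf_separation (hA : IsUnit A) :
    {r : ℝ | ∃ ps : EuclideanSpace ℝ (Fin d), ‖ps‖ = 1 ∧ r = barrier A c B o ps} =
      {r : ℝ | ∃ u : EuclideanSpace ℝ (Fin d), ‖u‖ = 1 ∧ r = separation A c B o u} := by
  ext r
  constructor
  · rintro ⟨ps, hps, rfl⟩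
    have hn : mv A⁻¹ ps ≠ 0 := by
      rw [Ne, mv_eq_zero_iff (Matrix.isUnit_nonsing_inv_iff.mpr hA), ← norm_eq_zero, hps]
      exact one_ne_zero
    exact ⟨_, norm_smul_inv_norm hn, barrier_eq_separation hA hps⟩
  · rintro ⟨u, hu, rfl⟩
    have hAu : mv A u ≠ 0 := by
      rw [Ne, mv_eq_zero_iff hA, ← norm_eq_zero, hu]
      exact one_ne_zero
    have hps : ‖‖mv A u‖⁻¹ • mv A u‖ = 1 := norm_smul_inv_norm hAu
    have ha : 0 < ‖mv A u‖ := norm_pos_iff.mpr hAu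
    refine ⟨_, hps, ?_⟩
    rw [barrier_eq_separation hA hps, mv_smul, mv_inv_mv hA, norm_smul, hu,
      mul_one, norm_inv, norm_norm, inv_inv, smul_smul, mul_inv_cancel₀ ha.ne', one_smul]

end Ellipsoid

/-- If the ellipsoids `E(A,c)` and `E(B,o)` are disjoint,
the supremum over unit vectors `p_s` of the barrier value `h(A,c,B,o,p_s)`
is attained and equals the Euclidean distance between the two ellipsoids. -/
theorem stmt7 {d : ℕ} (A B : Matrix (Fin d) (Fin d) ℝ)
    (hA : A.PosDef) (hB : B.PosDef)
    (c o : EuclideanSpace ℝ (Fin d))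
    (hdisj : ellipsoid A c ∩ ellipsoid B o = ∅) :
    IsGreatest {r : ℝ | ∃ ps : EuclideanSpace ℝ (Fin d), ‖ps‖ = 1 ∧
        r = barrier A c B o ps}
      (sInf {r : ℝ | ∃ x ∈ ellipsoid A c, ∃ y ∈ ellipsoid B o, r = ‖x - y‖}) := by
  obtain ⟨x₀, hx₀, y₀, hy₀, hmin⟩ := exists_isMinOn_norm_sub (isCompact_ellipsoid A c)
    (isCompact_ellipsoid B o) ⟨c, center_mem_ellipsoid A c⟩ ⟨o, center_mem_ellipsoid B o⟩
  have hne : x₀ ≠ y₀ := by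
    rintro rfl
    exact Set.eq_empty_iff_forall_notMem.mp hdisj x₀ ⟨hx₀, hy₀⟩
  have hdist : sInf {r : ℝ | ∃ x ∈ ellipsoid A c, ∃ y ∈ ellipsoid B o, r = ‖x - y‖} =
      ‖x₀ - y₀‖ := by
    refine IsLeast.csInf_eq ⟨⟨x₀, hx₀, y₀, hy₀, rfl⟩, ?_⟩
    rintro _ ⟨x, hx, y, hy, rfl⟩
    exact hmin (Set.sub_mem_sub hx hy)
  have hsep (u : EuclideanSpace ℝ (Fin d)) (hu : ‖u‖ = 1) : separation A c B o u ≤ ‖x₀ - y₀‖ :=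
    separation_le_norm_sub hA.isHermitian hB.isHermitian hx₀ hy₀ hu
  obtain ⟨u₀, hu₀, hle⟩ :=
    exists_norm_le_separation hA.isHermitian hB.isHermitian hx₀ hy₀ hmin hne
  rw [hdist, setOf_barrier_eq_setOf_separation hA.isUnit]
  exact ⟨⟨u₀, hu₀, le_antisymm hle (hsep u₀ hu₀)⟩, by rintro _ ⟨u, hu, rfl⟩; exact hsep u hu⟩
end
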